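/- Let d ≥ 1, let Ω ⊆ ℝ^d be a nonempty bounded open set, let ε > 0, δ ≥ 0, and 0 < k ≤ ε² + δ, and fix w ∈ V. Then the functional E(u) = ∫_Ω ( (1/2)|∇u(x)|² + (1/ε²)F(u(x)) ) dx + (1/(2k) + δ/(2kε²)) ∫_Ω (u(x) − w(x))² dx is strictly convex on V: for all u₁, u₂ ∈ V whose restrictions to Ω are not equal and all t ∈ (0,1), E(t u₁ + (1−t) u₂) < t E(u₁) + (1−t) E(u₂). -/

import Mathlib

/-! The integrand is ½|∇u|² + g(u) with g(s) = F(s)/ε² + c (s − w)² and c = (ε² + δ)/(2kε²).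
The gradient term is convex, and g(s) = s⁴/(4ε²) + (c − 1/(2ε²)) s² + (affine in s) is strictly
convex since k ≤ ε² + δ means c ≥ 1/(2ε²): the penalty absorbs the concave part of the double well.
Hence the integrand of the convex combination lies below the combination of the integrands, strictly
on the open set where u₁ ≠ u₂, which meets Ω and so has positive measure. -/

open MeasureTheory Set

theorem StrictConvexOn.const_mul {E : Type*} [AddCommMonoid E] [Module ℝ E] {s : Set E}
    {f : E → ℝ} {c : ℝ} (hc : 0 < c) (hf : StrictConvexOn ℝ s f) :
    StrictConvexOn ℝ s fun x => c * f x :=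
  ⟨hf.1, fun x hx y hy hxy a b ha hb hab => by
    simpa only [smul_eq_mul, mul_add, mul_left_comm c] using
      mul_lt_mul_of_pos_left (hf.2 hx hy hxy ha hb hab) hc⟩

theorem convexOn_univ_norm_sq {E : Type*} [SeminormedAddCommGroup E] [NormedSpace ℝ E] :
    ConvexOn ℝ univ fun x : E => ‖x‖ ^ 2 :=
  (convexOn_norm convex_univ).pow (fun _ _ => norm_nonneg _) 2

noncomputable def penalizedDoubleWell (ε c w s : ℝ) : ℝ :=
  1 / ε ^ 2 * (1 / 4 * (s ^ 2 - 1) ^ 2) + c * (s - w) ^ 2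

theorem strictConvexOn_penalizedDoubleWell {ε c : ℝ} (w : ℝ) (hε : ε ≠ 0)
    (hc : 1 / (2 * ε ^ 2) ≤ c) : StrictConvexOn ℝ univ (penalizedDoubleWell ε c w) := by
  have quartic : StrictConvexOn ℝ univ fun s : ℝ => 1 / (4 * ε ^ 2) * s ^ 4 :=
    (Even.strictConvexOn_pow (by decide) four_ne_zero).const_mul (by positivity)
  have quadratic : ConvexOn ℝ univ fun s : ℝ => (c - 1 / (2 * ε ^ 2)) * s ^ 2 :=
    (Even.convexOn_pow even_two).smul (sub_nonneg.2 hc)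
  have linear : ConvexOn ℝ univ fun s : ℝ => -2 * c * w * s :=
    (LinearMap.mulLeft ℝ (-2 * c * w)).convexOn convex_univ
  refine ((quartic.add_convexOn (quadratic.add linear)).add_const
    (1 / (4 * ε ^ 2) + c * w ^ 2)).congr fun s _ => ?_
  simp only [penalizedDoubleWell, Pi.add_apply]
  field_simp
  ring

theorem setIntegral_lt_setIntegral_of_le_of_exists_lt {X : Type*} [TopologicalSpace X]
    [MeasurableSpace X] [OpensMeasurableSpace X] {μ : Measure X} [μ.IsOpenPosMeasure]
    {s : Set X} {f g : X → ℝ} (hs : IsOpen s) (hf : IntegrableOn f s μ)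
    (hg : IntegrableOn g s μ) (hfc : ContinuousOn f s) (hgc : ContinuousOn g s)
    (hle : ∀ x ∈ s, f x ≤ g x) (hlt : ∃ x ∈ s, f x < g x) :
    ∫ x in s, f x ∂μ < ∫ x in s, g x ∂μ := by
  rw [← sub_pos, ← integral_sub hg hf, setIntegral_pos_iff_support_of_nonneg_ae
    ((ae_restrict_iff' hs.measurableSet).2 (.of_forall fun x hx => sub_nonneg.2 (hle x hx)))
    (hg.sub hf)]
  obtain ⟨x₀, hx₀s, hx₀⟩ := hlt
  have hopen : IsOpen (s ∩ (g - f) ⁻¹' Ioi 0) :=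
    (hgc.sub hfc).isOpen_inter_preimage hs isOpen_Ioi
  refine (hopen.measure_pos μ ⟨x₀, hx₀s, sub_pos.2 hx₀⟩).trans_le (measure_mono ?_)
  rintro x ⟨hxs, hx⟩
  exact ⟨(mem_Ioi.1 hx).ne', hxs⟩

theorem Continuous.integrableOn_of_isBounded {X : Type*} [MetricSpace X] [ProperSpace X]
    [MeasurableSpace X] [OpensMeasurableSpace X] {μ : Measure X} [IsFiniteMeasureOnCompacts μ]
    {F : Type*} [NormedAddCommGroup F] {f : X → F} (hf : Continuous f) {s : Set X}
    (hs : Bornology.IsBounded s) :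
    IntegrableOn f s μ :=
  (hf.continuousOn.integrableOn_compact hs.isCompact_closure).mono_set subset_closure

section AllenCahn

variable {E : Type*} [NormedAddCommGroup E] [InnerProductSpace ℝ E] [CompleteSpace E]

theorem gradient_convexComb {u₁ u₂ : E → ℝ} {x : E} (hu₁ : DifferentiableAt ℝ u₁ x)
    (hu₂ : DifferentiableAt ℝ u₂ x) (t : ℝ) :
    gradient (fun y => t * u₁ y + (1 - t) * u₂ y) x
      = t • gradient u₁ x + (1 - t) • gradient u₂ x := by
  have h : HasFDerivAt (fun y => t * u₁ y + (1 - t) * u₂ y)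
      (t • fderiv ℝ u₁ x + (1 - t) • fderiv ℝ u₂ x) x :=
    (hu₁.hasFDerivAt.const_mul t).add (hu₂.hasFDerivAt.const_mul (1 - t))
  rw [h.hasGradientAt.gradient, map_add, _root_.map_smul, _root_.map_smul]
  rfl

theorem ContDiff.continuous_gradient {u : E → ℝ} (hu : ContDiff ℝ 1 u) :
    Continuous (gradient u) :=
  (InnerProductSpace.toDual ℝ E).symm.continuous.comp (hu.continuous_fderiv one_ne_zero)

noncomputable def allenCahnDensity (ε c : ℝ) (w u : E → ℝ) (x : E) : ℝ :=
  1 / 2 * ‖gradient u x‖ ^ 2 + penalizedDoubleWell ε c (w x) (u x)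

variable {ε c t : ℝ} {w u₁ u₂ : E → ℝ} {x : E}

theorem allenCahnDensity_convexComb_le (hε : ε ≠ 0) (hc : 1 / (2 * ε ^ 2) ≤ c)
    (hu₁ : DifferentiableAt ℝ u₁ x) (hu₂ : DifferentiableAt ℝ u₂ x) (ht : t ∈ Icc (0 : ℝ) 1) :
    allenCahnDensity ε c w (fun y => t * u₁ y + (1 - t) * u₂ y) x
      ≤ t * allenCahnDensity ε c w u₁ x + (1 - t) * allenCahnDensity ε c w u₂ x := by
  have hgrad := convexOn_univ_norm_sq.2 (mem_univ (gradient u₁ x)) (mem_univ (gradient u₂ x))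
    ht.1 (sub_nonneg.2 ht.2) (add_sub_cancel t 1)
  have hpot := (strictConvexOn_penalizedDoubleWell (w x) hε hc).convexOn.2 (mem_univ (u₁ x))
    (mem_univ (u₂ x)) ht.1 (sub_nonneg.2 ht.2) (add_sub_cancel t 1)
  simp only [smul_eq_mul] at hgrad hpot
  simp only [allenCahnDensity, gradient_convexComb hu₁ hu₂]
  linarith

theorem allenCahnDensity_convexComb_lt (hε : ε ≠ 0) (hc : 1 / (2 * ε ^ 2) ≤ c)
    (hu₁ : DifferentiableAt ℝ u₁ x) (hu₂ : DifferentiableAt ℝ u₂ x) (hne : u₁ x ≠ u₂ x)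
    (ht : t ∈ Ioo (0 : ℝ) 1) :
    allenCahnDensity ε c w (fun y => t * u₁ y + (1 - t) * u₂ y) x
      < t * allenCahnDensity ε c w u₁ x + (1 - t) * allenCahnDensity ε c w u₂ x := by
  have hgrad := convexOn_univ_norm_sq.2 (mem_univ (gradient u₁ x)) (mem_univ (gradient u₂ x))
    ht.1.le (sub_nonneg.2 ht.2.le) (add_sub_cancel t 1)
  have hpot := (strictConvexOn_penalizedDoubleWell (w x) hε hc).2 (mem_univ (u₁ x))
    (mem_univ (u₂ x)) hne ht.1 (sub_pos.2 ht.2) (add_sub_cancel t 1)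
  simp only [smul_eq_mul] at hgrad hpot
  simp only [allenCahnDensity, gradient_convexComb hu₁ hu₂]
  linarith

theorem continuous_allenCahnDensity {u : E → ℝ} (hu : ContDiff ℝ 1 u) (hw : Continuous w) :
    Continuous (allenCahnDensity ε c w u) := by
  have := hu.continuous_gradient
  unfold allenCahnDensity penalizedDoubleWell
  fun_prop

theorem setIntegral_allenCahnDensity [MeasurableSpace E] [BorelSpace E] [ProperSpace E]
    {μ : Measure E} [IsFiniteMeasureOnCompacts μ] {Ω : Set E} (hΩ : Bornology.IsBounded Ω)
    {u : E → ℝ} (hu : ContDiff ℝ 1 u) (hw : Continuous w) :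
    ∫ x in Ω, allenCahnDensity ε c w u x ∂μ
      = (∫ x in Ω, (1 / 2 * ‖gradient u x‖ ^ 2 + 1 / ε ^ 2 * (1 / 4 * ((u x) ^ 2 - 1) ^ 2)) ∂μ)
        + c * ∫ x in Ω, (u x - w x) ^ 2 ∂μ := by
  have := hu.continuous_gradient
  have := hu.continuous
  have hint_sq : IntegrableOn (fun x => (u x - w x) ^ 2) Ω μ :=
    Continuous.integrableOn_of_isBounded (by fun_prop) hΩ
  rw [← integral_const_mul, ← integral_add (Continuous.integrableOn_of_isBounded (by fun_prop) hΩ)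
    (hint_sq.const_mul c)]
  simp only [allenCahnDensity, penalizedDoubleWell, add_assoc]

end AllenCahn

theorem stmt_7_general (d : ℕ)
    (Ω : Set (EuclideanSpace ℝ (Fin d)))
    (hΩbd : Bornology.IsBounded Ω) (hΩop : IsOpen Ω)
    (ε k δ : ℝ) (hε : 0 < ε) (hk0 : 0 < k) (hk : k ≤ ε ^ 2 + δ)
    (w : EuclideanSpace ℝ (Fin d) → ℝ) (hw : ContDiff ℝ 1 w)
    (E : (EuclideanSpace ℝ (Fin d) → ℝ) → ℝ)
    (hE : ∀ u, E u = (∫ x in Ω,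
      (1 / 2 * ‖gradient u x‖ ^ 2 + 1 / ε ^ 2 * (1 / 4 * ((u x) ^ 2 - 1) ^ 2)))
      + (1 / (2 * k) + δ / (2 * k * ε ^ 2)) * ∫ x in Ω, (u x - w x) ^ 2)
    (u₁ u₂ : EuclideanSpace ℝ (Fin d) → ℝ)
    (hu₁ : ContDiff ℝ 1 u₁) (hu₂ : ContDiff ℝ 1 u₂)
    (hne : ¬ Set.EqOn u₁ u₂ Ω)
    (t : ℝ) (ht : t ∈ Set.Ioo (0 : ℝ) 1) :
    E (fun x => t * u₁ x + (1 - t) * u₂ x) < t * E u₁ + (1 - t) * E u₂ := by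
  set c := 1 / (2 * k) + δ / (2 * k * ε ^ 2) with hc_def
  have hc : 1 / (2 * ε ^ 2) ≤ c := by
    have hc_eq : c = (ε ^ 2 + δ) / k * (1 / (2 * ε ^ 2)) := by rw [hc_def]; field_simp
    rw [hc_eq, le_mul_iff_one_le_left (by positivity), one_le_div hk0]
    exact hk
  have hE_density : ∀ u, ContDiff ℝ 1 u → E u = ∫ x in Ω, allenCahnDensity ε c w u x :=
    fun u hu => by rw [hE u, setIntegral_allenCahnDensity hΩbd hu hw.continuous]
  have hu : ContDiff ℝ 1 fun x => t * u₁ x + (1 - t) * u₂ x := by fun_prop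
  have hdiff₁ := hu₁.differentiable one_ne_zero
  have hdiff₂ := hu₂.differentiable one_ne_zero
  have hcont := fun v (hv : ContDiff ℝ 1 v) =>
    continuous_allenCahnDensity (ε := ε) (c := c) hv hw.continuous
  have hint₁ := (hcont _ hu₁).integrableOn_of_isBounded (μ := volume) hΩbd
  have hint₂ := (hcont _ hu₂).integrableOn_of_isBounded (μ := volume) hΩbd
  obtain ⟨x₀, hx₀Ω, hx₀⟩ : ∃ x ∈ Ω, u₁ x ≠ u₂ x := by
    simpa [Set.EqOn] using hne
  rw [hE_density _ hu, hE_density _ hu₁, hE_density _ hu₂, ← integral_const_mul,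
    ← integral_const_mul, ← integral_add (hint₁.const_mul t) (hint₂.const_mul (1 - t))]
  refine setIntegral_lt_setIntegral_of_le_of_exists_lt hΩop
    ((hcont _ hu).integrableOn_of_isBounded hΩbd)
    ((hint₁.const_mul t).add (hint₂.const_mul (1 - t))) (hcont _ hu).continuousOn (by fun_prop)
    (fun x _ => allenCahnDensity_convexComb_le hε.ne' hc (hdiff₁ x) (hdiff₂ x)
      (Ioo_subset_Icc_self ht))
    ⟨x₀, hx₀Ω, allenCahnDensity_convexComb_lt hε.ne' hc (hdiff₁ x₀) (hdiff₂ x₀) hx₀ ht⟩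

/-- Strict convexity of the discrete energy of the fully implicit scheme for the
artificially convexified Allen–Cahn model, under `0 < k ≤ ε² + δ` (Theorem 2.7). -/
theorem stmt_7 (d : ℕ) (hd : 1 ≤ d)
    (Ω : Set (EuclideanSpace ℝ (Fin d))) (hΩne : Ω.Nonempty)
    (hΩbd : Bornology.IsBounded Ω) (hΩop : IsOpen Ω)
    (ε k δ : ℝ) (hε : 0 < ε) (hδ : 0 ≤ δ) (hk0 : 0 < k) (hk : k ≤ ε ^ 2 + δ)
    (w : EuclideanSpace ℝ (Fin d) → ℝ) (hw : ContDiff ℝ 1 w)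
    (E : (EuclideanSpace ℝ (Fin d) → ℝ) → ℝ)
    (hE : ∀ u, E u = (∫ x in Ω,
      (1 / 2 * ‖gradient u x‖ ^ 2 + 1 / ε ^ 2 * (1 / 4 * ((u x) ^ 2 - 1) ^ 2)))
      + (1 / (2 * k) + δ / (2 * k * ε ^ 2)) * ∫ x in Ω, (u x - w x) ^ 2)
    (u₁ u₂ : EuclideanSpace ℝ (Fin d) → ℝ)
    (hu₁ : ContDiff ℝ 1 u₁) (hu₂ : ContDiff ℝ 1 u₂)
    (hne : ¬ Set.EqOn u₁ u₂ Ω)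
    (t : ℝ) (ht : t ∈ Set.Ioo (0 : ℝ) 1) :
    E (fun x => t * u₁ x + (1 - t) * u₂ x) < t * E u₁ + (1 - t) * E u₂ :=
  stmt_7_general d Ω hΩbd hΩop ε k δ hε hk0 hk w hw E hE u₁ u₂ hu₁ hu₂ hne t ht
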